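/- Let Λ and Γ be separably equivalent via _ΛM_Γ and _ΓN_Λ, let 𝒞 be an additive subcategory of Mod Λ closed under isomorphisms, and let 𝒟 be a subcategory of Mod Γ with T_N(𝒞) ⊆ 𝒟 and T_M(𝒟) ⊆ 𝒞. If a Γ-module L lies in ⊥(T_N(𝒞)), then L lies in ⊥𝒟. -/

import Mathlib

/-!
For a `Γ`-module `D`, the element `u ∈ N ⊗_Λ M` corresponding to `1 ∈ Γ ⊕ Y` is central, so
`d ↦ u ⊗ d` is a `Γ`-linear section of the contraction `N ⊗_Λ (M ⊗_Γ D) → D`,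
`n ⊗ m ⊗ d ↦ π(n ⊗ m) d`, where `π : N ⊗_Λ M → Γ` is the projection. Thus every `D ∈ 𝒟` is a
retract of `N ⊗_Λ (M ⊗_Γ D) ∈ T_N(𝒞)`, and `Ext^i(L, D)` is a retract of
`Ext^i(L, N ⊗_Λ (M ⊗_Γ D)) = 0`.
-/

open TensorProduct CategoryTheory MulOpposite

noncomputable section

/-! ## The balanced tensor product over a (possibly noncommutative) ring -/

/-- The submodule of relations defining the balanced tensor product `A ⊗[R] B`,
where `A` is an `(S,R)`-bimodule and `B` is a left `R`-module. -/
def BTrel (S R : Type) [Ring S] [Ring R]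
    (A : Type) [AddCommGroup A] [Module S A] [Module Rᵐᵒᵖ A] [SMulCommClass Rᵐᵒᵖ S A]
    (B : Type) [AddCommGroup B] [Module R B] : Submodule S (A ⊗[ℤ] B) :=
  Submodule.span S
    {x | ∃ (r : R) (a : A) (b : B), x = (op r • a) ⊗ₜ[ℤ] b - a ⊗ₜ[ℤ] (r • b)}

/-- The balanced tensor product `A ⊗[R] B` of a right `R`-module `A` (with a compatible left
`S`-action making it an `(S,R)`-bimodule) and a left `R`-module `B`; it is a left `S`-module. -/
def BT (S R : Type) [Ring S] [Ring R]
    (A : Type) [AddCommGroup A] [Module S A] [Module Rᵐᵒᵖ A] [SMulCommClass Rᵐᵒᵖ S A]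
    (B : Type) [AddCommGroup B] [Module R B] : Type :=
  (A ⊗[ℤ] B) ⧸ BTrel S R A B

instance (S R : Type) [Ring S] [Ring R]
    (A : Type) [AddCommGroup A] [Module S A] [Module Rᵐᵒᵖ A] [SMulCommClass Rᵐᵒᵖ S A]
    (B : Type) [AddCommGroup B] [Module R B] : AddCommGroup (BT S R A B) :=
  inferInstanceAs (AddCommGroup ((A ⊗[ℤ] B) ⧸ BTrel S R A B))

instance (S R : Type) [Ring S] [Ring R]
    (A : Type) [AddCommGroup A] [Module S A] [Module Rᵐᵒᵖ A] [SMulCommClass Rᵐᵒᵖ S A]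
    (B : Type) [AddCommGroup B] [Module R B] : Module S (BT S R A B) :=
  inferInstanceAs (Module S ((A ⊗[ℤ] B) ⧸ BTrel S R A B))

/-- The elementary tensor `a ⊗ b` in the balanced tensor product `A ⊗[R] B`. -/
def btmul (S R : Type) [Ring S] [Ring R]
    (A : Type) [AddCommGroup A] [Module S A] [Module Rᵐᵒᵖ A] [SMulCommClass Rᵐᵒᵖ S A]
    (B : Type) [AddCommGroup B] [Module R B] (a : A) (b : B) : BT S R A B :=
  Submodule.Quotient.mk (a ⊗ₜ[ℤ] b)

/-- Functoriality of the balanced tensor product in the second variable: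
this is the map `A ⊗[R] f : A ⊗[R] B ⟶ A ⊗[R] B'` induced by `f : B ⟶ B'`. -/
def btmap (S R : Type) [Ring S] [Ring R]
    (A : Type) [AddCommGroup A] [Module S A] [Module Rᵐᵒᵖ A] [SMulCommClass Rᵐᵒᵖ S A]
    {B B' : Type} [AddCommGroup B] [Module R B] [AddCommGroup B'] [Module R B']
    (f : B →ₗ[R] B') : BT S R A B →ₗ[S] BT S R A B' :=
  Submodule.mapQ _ _
    (TensorProduct.AlgebraTensorModule.map (LinearMap.id (R := S) (M := A))
      (f.restrictScalars ℤ)) <| by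
    rw [BTrel, Submodule.span_le]
    rintro x ⟨r, a, b, rfl⟩
    simp only [SetLike.mem_coe, Submodule.mem_comap, map_sub,
      TensorProduct.AlgebraTensorModule.map_tmul, LinearMap.id_coe, id_eq,
      LinearMap.coe_restrictScalars, map_smul]
    exact Submodule.subset_span ⟨r, a, f b, rfl⟩

/-! ## Separable equivalence -/

/-- A separable equivalence between rings `Λ` and `Γ`, given by a `(Λ,Γ)`-bimodule `M` and a
`(Γ,Λ)`-bimodule `N`, each finitely generated and projective as a one-sided module on either
side, together with a `Λ`-bimodule isomorphism `M ⊗[Γ] N ≅ Λ ⊕ X` and a `Γ`-bimodule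
isomorphism `N ⊗[Λ] M ≅ Γ ⊕ Y`.  The compatibility with the right actions is recorded on
elementary tensors (which generate the tensor product). -/
structure SepEq (Λ Γ : Type) [Ring Λ] [Ring Γ]
    (M : Type) [AddCommGroup M] [Module Λ M] [Module Γᵐᵒᵖ M] [SMulCommClass Γᵐᵒᵖ Λ M]
    (N : Type) [AddCommGroup N] [Module Γ N] [Module Λᵐᵒᵖ N] [SMulCommClass Λᵐᵒᵖ Γ N]
    (X : Type) [AddCommGroup X] [Module Λ X] [Module Λᵐᵒᵖ X] [SMulCommClass Λᵐᵒᵖ Λ X]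
    (Y : Type) [AddCommGroup Y] [Module Γ Y] [Module Γᵐᵒᵖ Y] [SMulCommClass Γᵐᵒᵖ Γ Y] :
    Type where
  finite_left_M : Module.Finite Λ M
  projective_left_M : Module.Projective Λ M
  finite_right_M : Module.Finite Γᵐᵒᵖ M
  projective_right_M : Module.Projective Γᵐᵒᵖ M
  finite_left_N : Module.Finite Γ N
  projective_left_N : Module.Projective Γ N
  finite_right_N : Module.Finite Λᵐᵒᵖ N
  projective_right_N : Module.Projective Λᵐᵒᵖ N
  /-- the left `Λ`-linear isomorphism `M ⊗[Γ] N ≅ Λ ⊕ X` -/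
  e : BT Λ Γ M N ≃ₗ[Λ] Λ × X
  /-- `e` is also right `Λ`-linear, i.e. it is a `Λ`-bimodule isomorphism -/
  e_right : ∀ (m : M) (n : N) (l : Λ),
    e (btmul Λ Γ M N m (op l • n)) = op l • e (btmul Λ Γ M N m n)
  /-- the left `Γ`-linear isomorphism `N ⊗[Λ] M ≅ Γ ⊕ Y` -/
  f : BT Γ Λ N M ≃ₗ[Γ] Γ × Y
  /-- `f` is also right `Γ`-linear, i.e. it is a `Γ`-bimodule isomorphism -/
  f_right : ∀ (n : N) (m : M) (g : Γ),
    f (btmul Γ Λ N M n (op g • m)) = op g • f (btmul Γ Λ N M n m)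

/-! ## Ext, orthogonal classes, (co)resolutions, Gorenstein categories -/

/-- `Ext^i_R(A, C) = 0` for all `i ≥ 1`. -/
def extVanishes (R : Type) [Ring R] (A C : Type) [AddCommGroup A] [Module R A]
    [AddCommGroup C] [Module R C] : Prop :=
  ∀ i : ℕ, 1 ≤ i →
    Subsingleton (((Ext ℤ (ModuleCat R) i).obj (Opposite.op (ModuleCat.of R A))).obj
      (ModuleCat.of R C))

/-- The left orthogonal class `⊥𝒞 = {A ∣ Ext^{≥1}(A, C) = 0 for all C ∈ 𝒞}`. -/
def leftPerp (R : Type) [Ring R] (𝒞 : Set (ModuleCat.{0} R)) : Set (ModuleCat.{0} R) :=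
  {A | ∀ C ∈ 𝒞, extVanishes R A C}

/-- The right orthogonal class `𝒞⊥ = {A ∣ Ext^{≥1}(C, A) = 0 for all C ∈ 𝒞}`. -/
def rightPerp (R : Type) [Ring R] (𝒞 : Set (ModuleCat.{0} R)) : Set (ModuleCat.{0} R) :=
  {A | ∀ C ∈ 𝒞, extVanishes R C A}

/-- A class of modules is self-orthogonal if `Ext^{≥1}(C, C') = 0` for all its members. -/
def SelfOrthClass (R : Type) [Ring R] (𝒞 : Set (ModuleCat.{0} R)) : Prop :=
  ∀ C ∈ 𝒞, ∀ C' ∈ 𝒞, extVanishes R C C'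

/-- Membership in `cores 𝒞̃`: `A` admits an exact sequence `0 → A → C^0 → C^1 → ⋯` with all
`C^i ∈ 𝒞` which stays exact after applying `Hom(-, C)` for every `C ∈ 𝒞`. -/
def MemCores (R : Type) [Ring R] (𝒞 : Set (ModuleCat.{0} R)) (A : ModuleCat.{0} R) : Prop :=
  ∃ (P : ℕ → ModuleCat.{0} R) (ι : A →ₗ[R] P 0) (d : ∀ i : ℕ, P i →ₗ[R] P (i + 1)),
    (∀ i, P i ∈ 𝒞) ∧ Function.Injective ⇑ι ∧ Function.Exact ⇑ι ⇑(d 0) ∧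
    (∀ i, Function.Exact ⇑(d i) ⇑(d (i + 1))) ∧
    (∀ C ∈ 𝒞,
      Function.Surjective (fun g : P 0 →ₗ[R] C => g ∘ₗ ι) ∧
      Function.Exact (fun g : P 1 →ₗ[R] C => g ∘ₗ d 0) (fun g : P 0 →ₗ[R] C => g ∘ₗ ι) ∧
      ∀ i, Function.Exact (fun g : P (i + 2) →ₗ[R] C => g ∘ₗ d (i + 1))
        (fun g : P (i + 1) →ₗ[R] C => g ∘ₗ d i))

/-- Membership in `res 𝒞̃`: `A` admits an exact sequence `⋯ → C_1 → C_0 → A → 0` with all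
`C_i ∈ 𝒞` which stays exact after applying `Hom(C, -)` for every `C ∈ 𝒞`. -/
def MemRes (R : Type) [Ring R] (𝒞 : Set (ModuleCat.{0} R)) (A : ModuleCat.{0} R) : Prop :=
  ∃ (P : ℕ → ModuleCat.{0} R) (π : P 0 →ₗ[R] A) (d : ∀ i : ℕ, P (i + 1) →ₗ[R] P i),
    (∀ i, P i ∈ 𝒞) ∧ Function.Surjective ⇑π ∧ Function.Exact ⇑(d 0) ⇑π ∧
    (∀ i, Function.Exact ⇑(d (i + 1)) ⇑(d i)) ∧
    (∀ C ∈ 𝒞,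
      Function.Surjective (fun g : C →ₗ[R] P 0 => π ∘ₗ g) ∧
      Function.Exact (fun g : C →ₗ[R] P 1 => d 0 ∘ₗ g) (fun g : C →ₗ[R] P 0 => π ∘ₗ g) ∧
      ∀ i, Function.Exact (fun g : C →ₗ[R] P (i + 2) => d (i + 1) ∘ₗ g)
        (fun g : C →ₗ[R] P (i + 1) => d i ∘ₗ g))

/-- The right Gorenstein category `r𝒢(𝒞) = ⊥𝒞 ∩ cores 𝒞̃`. -/
def rGor (R : Type) [Ring R] (𝒞 : Set (ModuleCat.{0} R)) : Set (ModuleCat.{0} R) :=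
  {A | A ∈ leftPerp R 𝒞 ∧ MemCores R 𝒞 A}

/-- The left Gorenstein category `l𝒢(𝒞) = 𝒞⊥ ∩ res 𝒞̃`. -/
def lGor (R : Type) [Ring R] (𝒞 : Set (ModuleCat.{0} R)) : Set (ModuleCat.{0} R) :=
  {A | A ∈ rightPerp R 𝒞 ∧ MemRes R 𝒞 A}

/-- Membership in the Gorenstein category `𝒢(𝒞)`: there is an exact complex with all terms
in `𝒞`, which is both `Hom(𝒞, -)`-exact and `Hom(-, 𝒞)`-exact, such that `A` is isomorphic
to one of its images. -/
def MemGor (R : Type) [Ring R] (𝒞 : Set (ModuleCat.{0} R)) (A : ModuleCat.{0} R) : Prop :=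
  ∃ (P : ℤ → ModuleCat.{0} R) (d : ∀ i : ℤ, P i →ₗ[R] P (i + 1)),
    (∀ i, P i ∈ 𝒞) ∧ (∀ i, Function.Exact ⇑(d i) ⇑(d (i + 1))) ∧
    (∀ C ∈ 𝒞, ∀ i : ℤ, Function.Exact (fun g : P (i + 1 + 1) →ₗ[R] C => g ∘ₗ d (i + 1))
      (fun g : P (i + 1) →ₗ[R] C => g ∘ₗ d i)) ∧
    (∀ C ∈ 𝒞, ∀ i : ℤ, Function.Exact (fun g : C →ₗ[R] P i => d i ∘ₗ g)
      (fun g : C →ₗ[R] P (i + 1) => d (i + 1) ∘ₗ g)) ∧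
    Nonempty (A ≃ₗ[R] LinearMap.range (d 0))

/-- The class of projective left `R`-modules. -/
def projClass (R : Type) [Ring R] : Set (ModuleCat.{0} R) :=
  {P | Module.Projective R P}

/-- The image class `T_A(𝒞)`: the class of left `S`-modules isomorphic to `A ⊗[R] C`
for some `C ∈ 𝒞`. -/
def tensorClass (S R : Type) [Ring S] [Ring R]
    (A : Type) [AddCommGroup A] [Module S A] [Module Rᵐᵒᵖ A] [SMulCommClass Rᵐᵒᵖ S A]
    (𝒞 : Set (ModuleCat.{0} R)) : Set (ModuleCat.{0} S) :=
  {D | ∃ C ∈ 𝒞, Nonempty (D ≃ₗ[S] BT S R A C)}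

/-- `Add C`: the class of modules isomorphic to direct summands of arbitrary direct sums of
copies of `C`. -/
def AddClass (R : Type) [Ring R] (C : Type) [AddCommGroup C] [Module R C] :
    Set (ModuleCat.{0} R) :=
  {D | ∃ (ι : Type) (s : D →ₗ[R] (ι →₀ C)) (r : (ι →₀ C) →ₗ[R] D), r ∘ₗ s = LinearMap.id}

/-- `add C`: the class of modules isomorphic to direct summands of finite direct sums of
copies of `C`. -/
def addClass (R : Type) [Ring R] (C : Type) [AddCommGroup C] [Module R C] :
    Set (ModuleCat.{0} R) :=
  {D | ∃ (n : ℕ) (s : D →ₗ[R] (Fin n → C)) (r : (Fin n → C) →ₗ[R] D), r ∘ₗ s = LinearMap.id}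

/-- An additive subcategory of `Mod R` closed under isomorphisms, viewed as a class of
modules: it is closed under isomorphisms, contains a zero module and is closed under finite
direct sums. -/
structure IsAdditiveSubcat (R : Type) [Ring R] (𝒞 : Set (ModuleCat.{0} R)) : Prop where
  iso_mem : ∀ {A B : ModuleCat.{0} R}, A ∈ 𝒞 → Nonempty (A ≃ₗ[R] B) → B ∈ 𝒞
  zero_mem : ModuleCat.of R PUnit ∈ 𝒞
  sum_mem : ∀ {A B : ModuleCat.{0} R}, A ∈ 𝒞 → B ∈ 𝒞 → ModuleCat.of R (A × B) ∈ 𝒞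

/-- `M` is a projective generator: it is projective and the ring is a direct summand of a
finite direct sum of copies of `M`. -/
def IsProjectiveGenerator (R : Type) [Ring R] (M : Type) [AddCommGroup M] [Module R M] :
    Prop :=
  Module.Projective R M ∧
    ∃ (n : ℕ) (s : R →ₗ[R] (Fin n → M)) (r : (Fin n → M) →ₗ[R] R), r ∘ₗ s = LinearMap.id

/-- `G` is Gorenstein projective: `G` is an image of a totally acyclic complex of
projectives, i.e. an exact complex of projective modules which stays exact after applying
`Hom(-, P)` for every projective module `P`. -/
def IsGorensteinProjective (R : Type) [Ring R] (G : Type) [AddCommGroup G] [Module R G] :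
    Prop :=
  ∃ (P : ℤ → ModuleCat.{0} R) (d : ∀ i : ℤ, P i →ₗ[R] P (i + 1)),
    (∀ i, Module.Projective R (P i)) ∧ (∀ i, Function.Exact ⇑(d i) ⇑(d (i + 1))) ∧
    (∀ (Q : ModuleCat.{0} R), Module.Projective R Q → ∀ i : ℤ,
      Function.Exact (fun g : P (i + 1 + 1) →ₗ[R] Q => g ∘ₗ d (i + 1))
        (fun g : P (i + 1) →ₗ[R] Q => g ∘ₗ d i)) ∧
    Nonempty (G ≃ₗ[R] LinearMap.range (d 0))

/-- `G` is Gorenstein injective: `G` is an image of an exact complex of injective modules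
which stays exact after applying `Hom(I, -)` for every injective module `I`. -/
def IsGorensteinInjective (R : Type) [Ring R] (G : Type) [AddCommGroup G] [Module R G] :
    Prop :=
  ∃ (P : ℤ → ModuleCat.{0} R) (d : ∀ i : ℤ, P i →ₗ[R] P (i + 1)),
    (∀ i, Module.Injective R (P i)) ∧ (∀ i, Function.Exact ⇑(d i) ⇑(d (i + 1))) ∧
    (∀ (I : ModuleCat.{0} R), Module.Injective R I → ∀ i : ℤ,
      Function.Exact (fun g : I →ₗ[R] P i => d i ∘ₗ g)
        (fun g : I →ₗ[R] P (i + 1) => d (i + 1) ∘ₗ g)) ∧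
    Nonempty (G ≃ₗ[R] LinearMap.range (d 0))

/-- `C` is a Wakamatsu tilting left `R`-module: `C` is self-orthogonal, admits a resolution
by finitely generated projective modules, and there is an exact sequence
`0 → R → C^0 → C^1 → ⋯` with all `C^i ∈ add C` which stays exact under `Hom(-, add C)`. -/
def IsWakamatsuTilting (R : Type) [Ring R] (C : Type) [AddCommGroup C] [Module R C] :
    Prop :=
  extVanishes R C C ∧
  (∃ (P : ℕ → ModuleCat.{0} R) (π : P 0 →ₗ[R] C) (d : ∀ i : ℕ, P (i + 1) →ₗ[R] P i),
    (∀ i, Module.Finite R (P i) ∧ Module.Projective R (P i)) ∧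
    Function.Surjective ⇑π ∧ Function.Exact ⇑(d 0) ⇑π ∧
    (∀ i, Function.Exact ⇑(d (i + 1)) ⇑(d i))) ∧
  MemCores R (addClass R C) (ModuleCat.of R R)

end

section Balanced

variable {S R : Type} [Ring S] [Ring R]
    {A : Type} [AddCommGroup A] [Module S A] [Module Rᵐᵒᵖ A] [SMulCommClass Rᵐᵒᵖ S A]
    {B : Type} [AddCommGroup B] [Module R B]

lemma btmul_add_left (a a' : A) (b : B) :
    btmul S R A B (a + a') b = btmul S R A B a b + btmul S R A B a' b :=
  (congrArg (Submodule.Quotient.mk (p := BTrel S R A B)) (add_tmul a a' b)).trans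
    (Submodule.Quotient.mk_add _)

lemma btmul_add_right (a : A) (b b' : B) :
    btmul S R A B a (b + b') = btmul S R A B a b + btmul S R A B a b' :=
  (congrArg (Submodule.Quotient.mk (p := BTrel S R A B)) (tmul_add a b b')).trans
    (Submodule.Quotient.mk_add _)

lemma btmul_smul_left (s : S) (a : A) (b : B) :
    btmul S R A B (s • a) b = s • btmul S R A B a b :=
  (congrArg (Submodule.Quotient.mk (p := BTrel S R A B)) (smul_tmul' s a b).symm).trans
    (Submodule.Quotient.mk_smul _ s _)

lemma btmul_op_smul (r : R) (a : A) (b : B) :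
    btmul S R A B (op r • a) b = btmul S R A B a (r • b) :=
  (Submodule.Quotient.eq _).2 (Submodule.subset_span ⟨r, a, b, rfl⟩)

@[elab_as_elim]
lemma BT.induction_on {p : BT S R A B → Prop} (x : BT S R A B) (zero : p 0)
    (btmul : ∀ a b, p (btmul S R A B a b)) (add : ∀ x y, p x → p y → p (x + y)) : p x := by
  obtain ⟨y, rfl⟩ := Submodule.Quotient.mk_surjective _ x
  induction y using TensorProduct.induction_on with
  | zero => exact zero
  | tmul a b => exact btmul a b
  | add u v hu hv => exact add _ _ hu hv

lemma BT.addHom_ext {T : Type} [AddCommMonoid T] {φ ψ : BT S R A B →+ T}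
    (h : ∀ a b, φ (btmul S R A B a b) = ψ (btmul S R A B a b)) : φ = ψ := by
  ext x
  induction x using BT.induction_on with
  | zero => simp only [map_zero]
  | btmul a b => exact h a b
  | add x y hx hy => simp only [map_add, hx, hy]

variable {T : Type} [AddCommGroup T]

def BT.liftAddHom (φ : A →+ B →+ T) (hφ : ∀ (r : R) a b, φ (op r • a) b = φ a (r • b)) :
    BT S R A B →+ T :=
  let ψ := TensorProduct.liftAddHom φ fun (n : ℤ) a b => by
    simp only [map_zsmul, AddMonoidHom.zsmul_apply]
  QuotientAddGroup.lift (BTrel S R A B).toAddSubgroup ψ fun x hx => by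
    -- the generators of `BTrel` are stable under `S`, so their `S`-span is their `ℤ`-span
    show ψ x = 0
    suffices ∀ s : S, ψ (s • x) = 0 by simpa only [one_smul] using this 1
    induction hx using Submodule.span_induction with
    | mem x hx =>
      obtain ⟨r, a, b, rfl⟩ := hx
      intro s
      simp only [ψ, smul_sub, smul_tmul', ← smul_comm (op r) s a, map_sub, liftAddHom_tmul, hφ,
        sub_self]
    | zero => simp only [smul_zero, map_zero, implies_true]
    | add x y _ _ hx hy => simp only [smul_add, map_add, hx, hy, add_zero, implies_true]
    | smul t x _ hx => simpa only [smul_smul] using fun s => hx (s * t)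

@[simp]
lemma BT.liftAddHom_btmul (φ : A →+ B →+ T) (hφ : ∀ (r : R) a b, φ (op r • a) b = φ a (r • b))
    (a : A) (b : B) : BT.liftAddHom φ hφ (btmul S R A B a b) = φ a b :=
  rfl

def BT.lift [Module S T] (φ : A →+ B →+ T) (hφ : ∀ (r : R) a b, φ (op r • a) b = φ a (r • b))
    (hS : ∀ (s : S) a b, φ (s • a) b = s • φ a b) : BT S R A B →ₗ[S] T where
  __ := BT.liftAddHom φ hφ
  map_smul' s x := by
    change BT.liftAddHom φ hφ (s • x) = s • BT.liftAddHom φ hφ x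
    induction x using BT.induction_on with
    | zero => rw [smul_zero, map_zero, smul_zero]
    | btmul a b => rw [← btmul_smul_left, BT.liftAddHom_btmul, BT.liftAddHom_btmul, hS]
    | add x y hx hy => rw [smul_add, map_add, map_add, hx, hy, smul_add]

lemma BT.linearMap_ext [Module S T] {φ ψ : BT S R A B →ₗ[S] T}
    (h : ∀ a b, φ (btmul S R A B a b) = ψ (btmul S R A B a b)) : φ = ψ :=
  LinearMap.toAddMonoidHom_injective (BT.addHom_ext h)

def BT.mk : A →+ B →+ BT S R A B :=
  AddMonoidHom.mk' (fun a => AddMonoidHom.mk' (btmul S R A B a) (btmul_add_right a))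
    fun a a' => by ext b; exact btmul_add_left a a' b

def BT.tmulRight (b : B) : A →ₗ[S] BT S R A B where
  toFun a := btmul S R A B a b
  map_add' a a' := btmul_add_left a a' b
  map_smul' s a := btmul_smul_left s a b

lemma BT.tmulRight_add (b b' : B) :
    BT.tmulRight (S := S) (R := R) (A := A) (b + b') = BT.tmulRight b + BT.tmulRight b' :=
  LinearMap.ext fun a => btmul_add_right a b b'

lemma BT.tmulRight_smul (r : R) (b : B) :
    BT.tmulRight (S := S) (R := R) (A := A) (r • b) =
      BT.tmulRight b ∘ₗ DistribSMul.toLinearMap S A (op r) :=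
  LinearMap.ext fun a => (btmul_op_smul r a b).symm

variable {B' B'' : Type} [AddCommGroup B'] [Module R B'] [AddCommGroup B''] [Module R B'']

lemma btmap_add (f g : B →ₗ[R] B') : btmap S R A (f + g) = btmap S R A f + btmap S R A g :=
  BT.linearMap_ext fun a b => btmul_add_right a (f b) (g b)

lemma btmap_comp (f : B' →ₗ[R] B'') (g : B →ₗ[R] B') :
    btmap S R A (f ∘ₗ g) = btmap S R A f ∘ₗ btmap S R A g :=
  BT.linearMap_ext fun _ _ => rfl

end Balanced

namespace SepEq

variable {Λ Γ : Type} [Ring Λ] [Ring Γ]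
    {M : Type} [AddCommGroup M] [Module Λ M] [Module Γᵐᵒᵖ M] [SMulCommClass Γᵐᵒᵖ Λ M]
    {N : Type} [AddCommGroup N] [Module Γ N] [Module Λᵐᵒᵖ N] [SMulCommClass Λᵐᵒᵖ Γ N]
    {X : Type} [AddCommGroup X] [Module Λ X] [Module Λᵐᵒᵖ X] [SMulCommClass Λᵐᵒᵖ Λ X]
    {Y : Type} [AddCommGroup Y] [Module Γ Y] [Module Γᵐᵒᵖ Y] [SMulCommClass Γᵐᵒᵖ Γ Y]
    (sep : SepEq Λ Γ M N X Y)

def coeff : N →+ M →+ Γ :=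
  BT.mk.compr₂ (LinearMap.fst Γ Γ Y ∘ₗ sep.f.toLinearMap).toAddMonoidHom

lemma coeff_apply (n : N) (m : M) : sep.coeff n m = (sep.f (btmul Γ Λ N M n m)).1 :=
  rfl

lemma coeff_smul (g : Γ) (n : N) (m : M) : sep.coeff (g • n) m = g * sep.coeff n m := by
  simp only [coeff_apply, btmul_smul_left, map_smul, Prod.smul_fst, smul_eq_mul]

lemma coeff_op_smul_left (a : Λ) (n : N) (m : M) :
    sep.coeff (op a • n) m = sep.coeff n (a • m) := by
  simp only [coeff_apply, btmul_op_smul]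

lemma coeff_op_smul_right (g : Γ) (n : N) (m : M) :
    sep.coeff n (op g • m) = sep.coeff n m * g := by
  simp only [coeff_apply, sep.f_right, Prod.smul_fst, MulOpposite.smul_eq_mul_unop, unop_op]

variable (D : Type) [AddCommGroup D] [Module Γ D]

def contractWith (n : N) : BT Λ Γ M D →+ D :=
  BT.liftAddHom ((smulAddHom Γ D).comp (sep.coeff n)) fun g m d => by
    simp only [AddMonoidHom.comp_apply, smulAddHom_apply, coeff_op_smul_right, mul_smul]

lemma contractWith_btmul (n : N) (m : M) (d : D) :
    sep.contractWith D n (btmul Λ Γ M D m d) = sep.coeff n m • d :=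
  rfl

lemma contractWith_add (n n' : N) :
    sep.contractWith D (n + n') = sep.contractWith D n + sep.contractWith D n' :=
  BT.addHom_ext fun m d => by
    simp only [AddMonoidHom.add_apply, contractWith_btmul, map_add, add_smul]

lemma contractWith_op_smul (a : Λ) (n : N) (z : BT Λ Γ M D) :
    sep.contractWith D (op a • n) z = sep.contractWith D n (a • z) := by
  induction z using BT.induction_on with
  | zero => simp only [map_zero, smul_zero]
  | btmul m d => rw [← btmul_smul_left, contractWith_btmul, contractWith_btmul,
      coeff_op_smul_left]
  | add z z' hz hz' => rw [smul_add, map_add, map_add, hz, hz']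

lemma contractWith_smul (g : Γ) (n : N) (z : BT Λ Γ M D) :
    sep.contractWith D (g • n) z = g • sep.contractWith D n z := by
  induction z using BT.induction_on with
  | zero => simp only [map_zero, smul_zero]
  | btmul m d => rw [contractWith_btmul, contractWith_btmul, coeff_smul, mul_smul]
  | add z z' hz hz' => rw [map_add, map_add, hz, hz', smul_add]

def contract : BT Γ Λ N (BT Λ Γ M D) →ₗ[Γ] D :=
  BT.lift (AddMonoidHom.mk' (sep.contractWith D) (sep.contractWith_add D))
    (sep.contractWith_op_smul D) (sep.contractWith_smul D)

lemma contract_btmap_tmulRight (d : D) (x : BT Γ Λ N M) :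
    sep.contract D (btmap Γ Λ N (BT.tmulRight d) x) = (sep.f x).1 • d := by
  induction x using BT.induction_on with
  | zero => simp only [map_zero, Prod.fst_zero, zero_smul]
  | btmul n m => rfl
  | add x y hx hy => simp only [map_add, hx, hy, Prod.fst_add, add_smul]

def unit : BT Γ Λ N M :=
  sep.f.symm (1, 0)

lemma f_btmap_op_smul (g : Γ) (x : BT Γ Λ N M) :
    sep.f (btmap Γ Λ N (DistribSMul.toLinearMap Λ M (op g)) x) = op g • sep.f x := by
  induction x using BT.induction_on with
  | zero => simp only [map_zero, smul_zero]
  | btmul n m => exact sep.f_right n m g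
  | add x y hx hy => rw [map_add, map_add, hx, hy, map_add, smul_add]

/-- `unit` is central in the `Γ`-bimodule `N ⊗[Λ] M`, since `1` is central in `Γ`. -/
lemma btmap_op_smul_unit (g : Γ) :
    btmap Γ Λ N (DistribSMul.toLinearMap Λ M (op g)) sep.unit = g • sep.unit := by
  apply sep.f.injective
  rw [f_btmap_op_smul, map_smul, unit, LinearEquiv.apply_symm_apply]
  ext
  · simp only [Prod.smul_fst, MulOpposite.smul_eq_mul_unop, unop_op, one_mul, smul_eq_mul,
      mul_one]
  · simp only [Prod.smul_snd, smul_zero]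

/-- `d ↦ unit ⊗ d` -/
def unitTmul : D →ₗ[Γ] BT Γ Λ N (BT Λ Γ M D) where
  toFun d := btmap Γ Λ N (BT.tmulRight d) sep.unit
  map_add' d d' := by rw [BT.tmulRight_add, btmap_add, LinearMap.add_apply]
  map_smul' g d := by
    rw [BT.tmulRight_smul, btmap_comp, LinearMap.comp_apply, btmap_op_smul_unit, map_smul,
      RingHom.id_apply]

lemma contract_unitTmul (d : D) : sep.contract D (sep.unitTmul D d) = d :=
  (sep.contract_btmap_tmulRight D d sep.unit).trans <| by
    rw [unit, LinearEquiv.apply_symm_apply, one_smul]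

def retract (D : ModuleCat.{0} Γ) : Retract D (ModuleCat.of Γ (BT Γ Λ N (BT Λ Γ M D))) where
  i := ModuleCat.ofHom (sep.unitTmul D)
  r := ModuleCat.ofHom (sep.contract D)
  retract := by ext d; exact sep.contract_unitTmul D d

end SepEq

lemma CategoryTheory.Retract.subsingleton_obj {C : Type*} [Category C] {A B : C}
    (h : Retract A B) {R : Type*} [Ring R] (F : C ⥤ ModuleCat R) [Subsingleton (F.obj B)] :
    Subsingleton (F.obj A) :=
  Function.LeftInverse.injective (g := (h.map F).r) (fun x => by
    rw [← ModuleCat.comp_apply, (h.map F).retract, ModuleCat.id_apply]) |>.subsingleton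

theorem separable_equivalence_leftPerp_descends_general (Λ Γ : Type) [Ring Λ] [Ring Γ]
    (M : Type) [AddCommGroup M] [Module Λ M] [Module Γᵐᵒᵖ M] [SMulCommClass Γᵐᵒᵖ Λ M]
    (N : Type) [AddCommGroup N] [Module Γ N] [Module Λᵐᵒᵖ N] [SMulCommClass Λᵐᵒᵖ Γ N]
    (X : Type) [AddCommGroup X] [Module Λ X] [Module Λᵐᵒᵖ X] [SMulCommClass Λᵐᵒᵖ Λ X]
    (Y : Type) [AddCommGroup Y] [Module Γ Y] [Module Γᵐᵒᵖ Y] [SMulCommClass Γᵐᵒᵖ Γ Y]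
    (sep : SepEq Λ Γ M N X Y)
    (𝒞 : Set (ModuleCat.{0} Λ))
    (𝒟 : Set (ModuleCat.{0} Γ))
    (hMD : ∀ D ∈ 𝒟, ModuleCat.of Λ (BT Λ Γ M D) ∈ 𝒞)
    (L : Type) [AddCommGroup L] [Module Γ L]
    (hL : ModuleCat.of Γ L ∈ leftPerp Γ (tensorClass Γ Λ N 𝒞)) :
    ModuleCat.of Γ L ∈ leftPerp Γ 𝒟 := by
  intro D hD i hi
  have hND : ModuleCat.of Γ (BT Γ Λ N (BT Λ Γ M D)) ∈ tensorClass Γ Λ N 𝒞 :=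
    ⟨_, hMD D hD, ⟨LinearEquiv.refl Γ _⟩⟩
  have hExt := hL _ hND i hi
  exact (sep.retract D).subsingleton_obj _

theorem separable_equivalence_leftPerp_descends (Λ Γ : Type) [Ring Λ] [Ring Γ]
    (M : Type) [AddCommGroup M] [Module Λ M] [Module Γᵐᵒᵖ M] [SMulCommClass Γᵐᵒᵖ Λ M]
    (N : Type) [AddCommGroup N] [Module Γ N] [Module Λᵐᵒᵖ N] [SMulCommClass Λᵐᵒᵖ Γ N]
    (X : Type) [AddCommGroup X] [Module Λ X] [Module Λᵐᵒᵖ X] [SMulCommClass Λᵐᵒᵖ Λ X]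
    (Y : Type) [AddCommGroup Y] [Module Γ Y] [Module Γᵐᵒᵖ Y] [SMulCommClass Γᵐᵒᵖ Γ Y]
    (sep : SepEq Λ Γ M N X Y)
    (𝒞 : Set (ModuleCat.{0} Λ)) (h𝒞 : IsAdditiveSubcat Λ 𝒞)
    (𝒟 : Set (ModuleCat.{0} Γ))
    (hND : tensorClass Γ Λ N 𝒞 ⊆ 𝒟)
    (hMD : ∀ D ∈ 𝒟, ModuleCat.of Λ (BT Λ Γ M D) ∈ 𝒞)
    (L : Type) [AddCommGroup L] [Module Γ L]
    (hL : ModuleCat.of Γ L ∈ leftPerp Γ (tensorClass Γ Λ N 𝒞)) :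
    ModuleCat.of Γ L ∈ leftPerp Γ 𝒟 :=
  separable_equivalence_leftPerp_descends_general Λ Γ M N X Y sep 𝒞 𝒟 hMD L hL
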